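/- Let A and B be groups and W ⊆ F_∞ a set of words. Regard A and B as subgroups of the verbal product A ∗_W B. The function Ψ : W(A) × W(B) → W(A ∗_W B) defined by Ψ(a,b) := ab is a group isomorphism. -/

import Mathlib

open Monoid
open scoped commutatorElement

/-- The verbal subgroup `W(G)`: the subgroup of `G` generated by all evaluations of the
words of `W` at tuples of elements of `G`. -/
def verbalSubgroup (W : Set (FreeGroup ℕ)) (G : Type*) [Group G] : Subgroup G :=
  Subgroup.closure {x | ∃ w ∈ W, ∃ f : ℕ → G, FreeGroup.lift f w = x}

theorem lift_comp_eval {G H : Type*} [Group G] [Group H] (φ : G →* H) (f : ℕ → G)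
    (w : FreeGroup ℕ) : φ (FreeGroup.lift f w) = FreeGroup.lift (φ ∘ f) w := by
  have h : φ.comp (FreeGroup.lift f) = FreeGroup.lift (φ ∘ f) :=
    FreeGroup.ext_hom _ _ (fun a => by simp)
  exact DFunLike.congr_fun h w

theorem verbalSubgroup_map_le {G H : Type*} [Group G] [Group H] (W : Set (FreeGroup ℕ))
    (φ : G →* H) : (verbalSubgroup W G).map φ ≤ verbalSubgroup W H := by
  rw [verbalSubgroup, MonoidHom.map_closure, Subgroup.closure_le]
  rintro x ⟨y, ⟨w, hw, f, rfl⟩, rfl⟩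
  exact Subgroup.subset_closure ⟨w, hw, φ ∘ f, (lift_comp_eval φ f w).symm⟩

/-- Verbal subgroups are normal. -/
instance verbalSubgroup_normal (W : Set (FreeGroup ℕ)) (G : Type*) [Group G] :
    (verbalSubgroup W G).Normal := by
  constructor
  intro n hn g
  have h := verbalSubgroup_map_le (G := G) (H := G) W (MulAut.conj g).toMonoidHom
  have h2 : (MulAut.conj g).toMonoidHom n ∈ verbalSubgroup W G := h ⟨n, hn, rfl⟩
  simpa using h2

/-- The subgroup `[A,B]` of the free product `A ∗ B` generated by the commutators
`[a,b] = a * b * a⁻¹ * b⁻¹` with `a ∈ A`, `b ∈ B`. -/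
def commSubgroup (A B : Type*) [Group A] [Group B] : Subgroup (Coprod A B) :=
  Subgroup.closure {x | ∃ (a : A) (b : B), x = ⁅(Coprod.inl a : Coprod A B), Coprod.inr b⁆}

/-- The kernel of the verbal product: (the normal closure of) `W(A ∗ B) ∩ [A,B]`.
Since `W(A ∗ B) ∩ [A,B]` is in fact a normal subgroup of `A ∗ B`, taking the normal
closure does not change the subgroup. -/
def verbalProductKer (W : Set (FreeGroup ℕ)) (A B : Type*) [Group A] [Group B] :
    Subgroup (Coprod A B) :=
  Subgroup.normalClosure ((verbalSubgroup W (Coprod A B) ⊓ commSubgroup A B : Subgroup _) : Set _)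

instance verbalProductKer_normal (W : Set (FreeGroup ℕ)) (A B : Type*) [Group A] [Group B] :
    (verbalProductKer W A B).Normal := Subgroup.normalClosure_normal

/-- The verbal product `A ∗_W B := (A ∗ B)/(W(A ∗ B) ∩ [A,B])`. -/
abbrev VerbalProduct (W : Set (FreeGroup ℕ)) (A B : Type*) [Group A] [Group B] : Type _ :=
  Coprod A B ⧸ verbalProductKer W A B

/-- The quotient homomorphism `q : A ∗ B → A ∗_W B`. -/
def vq (W : Set (FreeGroup ℕ)) (A B : Type*) [Group A] [Group B] :
    Coprod A B →* VerbalProduct W A B :=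
  QuotientGroup.mk' (verbalProductKer W A B)

/-- The copy of `A` inside the verbal product `A ∗_W B`. -/
def vinl (W : Set (FreeGroup ℕ)) (A B : Type*) [Group A] [Group B] :
    A →* VerbalProduct W A B := (vq W A B).comp Coprod.inl

/-- The copy of `B` inside the verbal product `A ∗_W B`. -/
def vinr (W : Set (FreeGroup ℕ)) (A B : Type*) [Group A] [Group B] :
    B →* VerbalProduct W A B := (vq W A B).comp Coprod.inr

/-- `[A,B]^w`, the image of `[A,B]` in the verbal product `A ∗_W B`. -/
def commW (W : Set (FreeGroup ℕ)) (A B : Type*) [Group A] [Group B] :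
    Subgroup (VerbalProduct W A B) := (commSubgroup A B).map (vq W A B)

/-!
Modulo `[A,B]` the images of `A` and `B` commute, so the quotient map `A ∗ B → (A ∗ B)/[A,B]`
factors through `A × B`: `[A,B]` is the kernel of `A ∗ B → A × B`. Hence every `y ∈ A ∗ B` is
`inl (fst y) * inr (snd y)` modulo `[A,B]`. If `y ∈ W(A ∗ B)` then `fst y ∈ W(A)` and
`snd y ∈ W(B)`, so the error term lies in `W(A ∗ B) ∩ [A,B]` and dies in `A ∗_W B`. Thus
`W(A ∗_W B)` consists of the products `ab` with `a ∈ W(A)`, `b ∈ W(B)`; these factors commute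
because `[a,b] ∈ W(A ∗ B) ∩ [A,B]`, and they are recovered through `A ∗_W B → A × B`.
-/

theorem verbalSubgroup_map_of_surjective {G H : Type*} [Group G] [Group H]
    (W : Set (FreeGroup ℕ)) {φ : G →* H} (hφ : Function.Surjective φ) :
    (verbalSubgroup W G).map φ = verbalSubgroup W H := by
  refine le_antisymm (verbalSubgroup_map_le W φ) ?_
  rw [verbalSubgroup, Subgroup.closure_le]
  rintro _ ⟨w, hw, f, rfl⟩
  refine ⟨FreeGroup.lift (fun n => Function.surjInv hφ (f n)) w,
    Subgroup.subset_closure ⟨w, hw, _, rfl⟩, ?_⟩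
  rw [lift_comp_eval]
  congr
  exact funext fun n => Function.surjInv_eq hφ (f n)

theorem map_mem_verbalSubgroup {G H : Type*} [Group G] [Group H] {W : Set (FreeGroup ℕ)}
    (φ : G →* H) {x : G} (hx : x ∈ verbalSubgroup W G) : φ x ∈ verbalSubgroup W H :=
  verbalSubgroup_map_le W φ ⟨x, hx, rfl⟩

theorem conj_commutatorElement_left {G : Type*} [Group G] (x y z : G) :
    x * ⁅y, z⁆ * x⁻¹ = ⁅x * y, z⁆ * ⁅x, z⁆⁻¹ := by
  simp only [commutatorElement_def]; group

theorem conj_commutatorElement_right {G : Type*} [Group G] (x y z : G) :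
    z * ⁅y, x⁆ * z⁻¹ = ⁅y, z⁆⁻¹ * ⁅y, z * x⁆ := by
  simp only [commutatorElement_def]; group

section commSubgroup

variable {A B : Type*} [Group A] [Group B]

theorem commutatorElement_inl_inr_mem_commSubgroup (a : A) (b : B) :
    ⁅(Coprod.inl a : Coprod A B), Coprod.inr b⁆ ∈ commSubgroup A B :=
  Subgroup.subset_closure ⟨a, b, rfl⟩

theorem conj_mem_commSubgroup (g : Coprod A B) {x : Coprod A B} (hx : x ∈ commSubgroup A B) :
    g * x * g⁻¹ ∈ commSubgroup A B := by
  induction g using Coprod.induction_on generalizing x with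
  | inl a =>
    refine (Subgroup.closure_le
      (K := (commSubgroup A B).comap (MulAut.conj (Coprod.inl a : Coprod A B)).toMonoidHom)).2 ?_ hx
    rintro _ ⟨a', b, rfl⟩
    rw [SetLike.mem_coe, Subgroup.mem_comap, MulEquiv.coe_toMonoidHom, MulAut.conj_apply,
      conj_commutatorElement_left, ← map_mul]
    exact mul_mem (commutatorElement_inl_inr_mem_commSubgroup _ _)
      (inv_mem (commutatorElement_inl_inr_mem_commSubgroup _ _))
  | inr b =>
    refine (Subgroup.closure_le
      (K := (commSubgroup A B).comap (MulAut.conj (Coprod.inr b : Coprod A B)).toMonoidHom)).2 ?_ hx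
    rintro _ ⟨a, b', rfl⟩
    rw [SetLike.mem_coe, Subgroup.mem_comap, MulEquiv.coe_toMonoidHom, MulAut.conj_apply,
      conj_commutatorElement_right, ← map_mul]
    exact mul_mem (inv_mem (commutatorElement_inl_inr_mem_commSubgroup _ _))
      (commutatorElement_inl_inr_mem_commSubgroup _ _)
  | mul g h hg hh => simpa only [mul_inv_rev, mul_assoc] using hg (hh hx)

instance commSubgroup_normal : (commSubgroup A B).Normal :=
  ⟨fun _ hx g => conj_mem_commSubgroup g hx⟩

theorem commSubgroup_eq_ker_toProd :
    commSubgroup A B = (Coprod.toProd : Coprod A B →* A × B).ker := by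
  refine le_antisymm ?_ fun g hg => ?_
  · rw [commSubgroup, Subgroup.closure_le]
    rintro _ ⟨a, b, rfl⟩
    simp [commutatorElement_def]
  · let mk := QuotientGroup.mk' (commSubgroup A B)
    have hcomm : ∀ a b, Commute (mk.comp Coprod.inl a) (mk.comp Coprod.inr b) := fun a b =>
      commutatorElement_eq_one_iff_commute.mp <| by
        rw [MonoidHom.comp_apply, MonoidHom.comp_apply, ← map_commutatorElement,
          QuotientGroup.mk'_apply, QuotientGroup.eq_one_iff]
        exact commutatorElement_inl_inr_mem_commSubgroup a b
    have hfactor : (MonoidHom.noncommCoprod _ _ hcomm).comp Coprod.toProd = mk :=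
      Coprod.hom_ext (MonoidHom.ext fun _ => by simp) (MonoidHom.ext fun _ => by simp)
    have hg' : mk g = 1 := by
      rw [← hfactor, MonoidHom.comp_apply, MonoidHom.mem_ker.mp hg, map_one]
    exact (QuotientGroup.eq_one_iff g).mp hg'

theorem verbalProductKer_le_ker_toProd (W : Set (FreeGroup ℕ)) :
    verbalProductKer W A B ≤ (Coprod.toProd : Coprod A B →* A × B).ker :=
  Subgroup.normalClosure_le_normal fun _ hx => by rw [← commSubgroup_eq_ker_toProd]; exact hx.2

end commSubgroup

namespace VerbalProduct

variable (W : Set (FreeGroup ℕ)) (A B : Type*) [Group A] [Group B]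

def toProd : VerbalProduct W A B →* A × B :=
  QuotientGroup.lift _ Coprod.toProd (verbalProductKer_le_ker_toProd W)

variable {W A B}

theorem vq_eq_one_of_toProd_eq_one {x : Coprod A B} (hW : x ∈ verbalSubgroup W (Coprod A B))
    (hx : Coprod.toProd x = 1) : vq W A B x = 1 := by
  rw [vq, QuotientGroup.mk'_apply, QuotientGroup.eq_one_iff]
  refine Subgroup.subset_normalClosure ⟨hW, ?_⟩
  rw [SetLike.mem_coe, commSubgroup_eq_ker_toProd]
  exact hx

theorem commute_vinl_vinr {a : A} {b : B} (ha : a ∈ verbalSubgroup W A)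
    (hb : b ∈ verbalSubgroup W B) : Commute (vinl W A B a) (vinr W A B b) := by
  have hW : ⁅(Coprod.inl a : Coprod A B), Coprod.inr b⁆ ∈ verbalSubgroup W (Coprod A B) := by
    have hinl := map_mem_verbalSubgroup (Coprod.inl : A →* Coprod A B) ha
    have hinr := map_mem_verbalSubgroup (Coprod.inr : B →* Coprod A B) hb
    rw [commutatorElement_def]
    exact mul_mem (mul_mem (mul_mem hinl hinr) (inv_mem hinl)) (inv_mem hinr)
  have hker :
      (Coprod.toProd : Coprod A B →* A × B) ⁅(Coprod.inl a : Coprod A B), Coprod.inr b⁆ = 1 := by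
    simp [commutatorElement_def]
  have h := vq_eq_one_of_toProd_eq_one hW hker
  rw [map_commutatorElement] at h
  exact commutatorElement_eq_one_iff_commute.mp h

theorem vq_eq_vinl_mul_vinr {y : Coprod A B} (hy : y ∈ verbalSubgroup W (Coprod A B)) :
    vq W A B y = vinl W A B (Coprod.fst y) * vinr W A B (Coprod.snd y) := by
  have hfst := map_mem_verbalSubgroup (Coprod.fst : Coprod A B →* A) hy
  have hsnd := map_mem_verbalSubgroup (Coprod.snd : Coprod A B →* B) hy
  set p : Coprod A B := Coprod.inl (Coprod.fst y) * Coprod.inr (Coprod.snd y)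
  have hp : p ∈ verbalSubgroup W (Coprod A B) :=
    mul_mem (map_mem_verbalSubgroup (Coprod.inl : A →* Coprod A B) hfst)
      (map_mem_verbalSubgroup (Coprod.inr : B →* Coprod A B) hsnd)
  have herror : vq W A B (p⁻¹ * y) = 1 :=
    vq_eq_one_of_toProd_eq_one (mul_mem (inv_mem hp) hy) (by simp [p, ← Coprod.prod_mk_fst_snd])
  rw [map_mul, map_inv, inv_mul_eq_one] at herror
  rw [← herror, map_mul]
  rfl

variable (W A B)

/-- The map `Ψ(a, b) = ab`. -/
def verbalMul : verbalSubgroup W A × verbalSubgroup W B →* VerbalProduct W A B :=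
  MonoidHom.noncommCoprod ((vinl W A B).comp (verbalSubgroup W A).subtype)
    ((vinr W A B).comp (verbalSubgroup W B).subtype) fun a b => commute_vinl_vinr a.2 b.2

theorem toProd_verbalMul (p : verbalSubgroup W A × verbalSubgroup W B) :
    toProd W A B (verbalMul W A B p) = ((p.1 : A), (p.2 : B)) := by
  simp [verbalMul, toProd, vinl, vinr, vq]

theorem verbalMul_injective : Function.Injective (verbalMul W A B) := fun p q h => by
  have h' := congrArg (toProd W A B) h
  simp only [toProd_verbalMul, Prod.mk.injEq] at h'
  exact Prod.ext (Subtype.ext h'.1) (Subtype.ext h'.2)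

theorem range_verbalMul : (verbalMul W A B).range = verbalSubgroup W (VerbalProduct W A B) := by
  refine le_antisymm ?_ ?_
  · rintro _ ⟨p, rfl⟩
    exact mul_mem (map_mem_verbalSubgroup (vinl W A B) p.1.2)
      (map_mem_verbalSubgroup (vinr W A B) p.2.2)
  · rw [← verbalSubgroup_map_of_surjective W (QuotientGroup.mk'_surjective _)]
    rintro _ ⟨y, hy, rfl⟩
    exact ⟨(⟨_, map_mem_verbalSubgroup (Coprod.fst : Coprod A B →* A) hy⟩,
      ⟨_, map_mem_verbalSubgroup (Coprod.snd : Coprod A B →* B) hy⟩),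
      (vq_eq_vinl_mul_vinr hy).symm⟩

end VerbalProduct

/-- The map `Ψ : W(A) × W(B) → W(A ∗_W B)`, `Ψ(a,b) = ab`, is a group isomorphism. -/
theorem verbalSubgroup_of_verbalProduct_iso {A B : Type*} [Group A] [Group B]
    (W : Set (FreeGroup ℕ)) :
    ∃ Ψ : (verbalSubgroup W A × verbalSubgroup W B) ≃*
        verbalSubgroup W (VerbalProduct W A B),
      ∀ (a : verbalSubgroup W A) (b : verbalSubgroup W B),
        (Ψ (a, b) : VerbalProduct W A B) = vinl W A B a * vinr W A B b :=
  ⟨(MonoidHom.ofInjective (VerbalProduct.verbalMul_injective W A B)).trans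
      (MulEquiv.subgroupCongr (VerbalProduct.range_verbalMul W A B)), fun _ _ => rfl⟩
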